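/- Under the error variables R̃ = R R̂^T, ṽ = v - R̃v̂, p̃ = p - R̃p̂ - (I₃ - R̃)p_c, the closed-loop dynamics of the continuous observer satisfy R̃' = R̃(-k_R ψ(MR̃))^×, p̃' = ṽ - R̃K_p R̃^T p̃, ṽ' = (I₃ - R̃)g - R̃K_v R̃^T p̃; in particular the attitude error dynamics are decoupled from (p̃, ṽ). -/

import Mathlib

open Matrix

noncomputable section

attribute [local instance] Matrix.normedAddCommGroup Matrix.normedSpace

def SO3 (R : Matrix (Fin 3) (Fin 3) ℝ) : Prop :=
  Rᵀ * R = 1 ∧ R * Rᵀ = 1 ∧ R.det = 1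

def skew (x : Fin 3 → ℝ) : Matrix (Fin 3) (Fin 3) ℝ :=
  !![0, -x 2, x 1; x 2, 0, -x 0; -x 1, x 0, 0]

def psi (A : Matrix (Fin 3) (Fin 3) ℝ) : Fin 3 → ℝ :=
  (2 : ℝ)⁻¹ • ![A 2 1 - A 1 2, A 0 2 - A 2 0, A 1 0 - A 0 1]

/-!
Everything rests on the centring `∑ kᵢ (pᵢ - p_c) = 0`. With it, each landmark innovation is
`pᵢ - p̂ - R̂ yᵢ = (I - R̃ᵀ)(pᵢ - p_c) + R̃ᵀ p̃`, so `ȳ = R̃ᵀ p̃`, and in `σ_R` the `p̃`-part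
collapses to `(∑ kᵢ (pᵢ - p_c)) × R̃ᵀ p̃ = 0`, leaving `σ_R = ψ(M R̃)`. Differentiating `R̃ = R R̂ᵀ`
then gives `R̃' = -k_R R̃ σ_R^×`, and this term exactly cancels the corrections `k_R σ_R^× (·)` of
the observer when `R̃ (p̂ - p_c)` and `R̃ v̂` are differentiated.
-/

section Calculus

variable {𝕜 : Type*} [NontriviallyNormedField 𝕜] {m n o : Type*} [Fintype m] [Fintype n]
  [Fintype o] {t : 𝕜}

theorem HasDerivAt.matrix_transpose {A : 𝕜 → Matrix m n 𝕜} {A' : Matrix m n 𝕜}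
    (hA : HasDerivAt A A' t) : HasDerivAt (fun s => (A s)ᵀ) A'ᵀ t :=
  hasDerivAt_pi.2 fun j => hasDerivAt_pi.2 fun i => hasDerivAt_pi.1 (hasDerivAt_pi.1 hA i) j

variable [CompleteSpace 𝕜]

theorem LinearMap.hasDerivAt_of_bilinear {E F G : Type*} [NormedAddCommGroup E] [NormedSpace 𝕜 E]
    [FiniteDimensional 𝕜 E] [NormedAddCommGroup F] [NormedSpace 𝕜 F] [FiniteDimensional 𝕜 F]
    [NormedAddCommGroup G] [NormedSpace 𝕜 G] (f : E →ₗ[𝕜] F →ₗ[𝕜] G) {u : 𝕜 → E} {v : 𝕜 → F}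
    {u' : E} {v' : F} (hu : HasDerivAt u u' t) (hv : HasDerivAt v v' t) :
    HasDerivAt (fun s => f (u s) (v s)) (f u' (v t) + f (u t) v') t := by
  simpa [add_comm] using
    f.toContinuousBilinearMap.hasDerivAt_of_bilinear (fun _ => hu) (fun _ => hv)

theorem HasDerivAt.matrix_mul {A : 𝕜 → Matrix m n 𝕜} {B : 𝕜 → Matrix n o 𝕜}
    {A' : Matrix m n 𝕜} {B' : Matrix n o 𝕜} (hA : HasDerivAt A A' t) (hB : HasDerivAt B B' t) :
    HasDerivAt (fun s => A s * B s) (A' * B t + A t * B') t :=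
  (LinearMap.mk₂ 𝕜 (· * ·) Matrix.add_mul Matrix.smul_mul Matrix.mul_add
    fun c M N => Matrix.mul_smul M c N).hasDerivAt_of_bilinear hA hB

theorem HasDerivAt.matrix_mulVec {A : 𝕜 → Matrix m n 𝕜} {x : 𝕜 → n → 𝕜}
    {A' : Matrix m n 𝕜} {x' : n → 𝕜} (hA : HasDerivAt A A' t) (hx : HasDerivAt x x' t) :
    HasDerivAt (fun s => A s *ᵥ x s) (A' *ᵥ x t + A t *ᵥ x') t :=
  (mulVecBilin 𝕜 𝕜).hasDerivAt_of_bilinear hA hx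

theorem HasDerivAt.matrix_mulVec_of_frame {Q : 𝕜 → Matrix m n 𝕜} {w : 𝕜 → n → 𝕜}
    {Ω : Matrix n n 𝕜} {f : n → 𝕜}
    (hQ : HasDerivAt Q (-(Q t * Ω)) t) (hw : HasDerivAt w (f + Ω *ᵥ w t) t) :
    HasDerivAt (fun s => Q s *ᵥ w s) (Q t *ᵥ f) t :=
  (hQ.matrix_mulVec hw).congr_deriv <| by
    rw [neg_mulVec, mulVec_add, ← mulVec_mulVec]; abel

theorem HasDerivAt.sub_mulVec_sub_of_frame [DecidableEq n] {Q : 𝕜 → Matrix n n 𝕜} {x w : 𝕜 → n → 𝕜}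
    {Ω : Matrix n n 𝕜} {x' f c : n → 𝕜} (hx : HasDerivAt x x' t)
    (hQ : HasDerivAt Q (-(Q t * Ω)) t) (hw : HasDerivAt w (f + Ω *ᵥ (w t - c)) t) :
    HasDerivAt (fun s => x s - Q s *ᵥ w s - (1 - Q s) *ᵥ c) (x' - Q t *ᵥ f) t := by
  have hQw := hQ.matrix_mulVec_of_frame (w := fun s => w s - c) (hw.sub_const c)
  have hfun : (fun s => x s - Q s *ᵥ w s - (1 - Q s) *ᵥ c)
      = fun s => x s - (Q s *ᵥ (w s - c) + c) := by
    ext1 s; rw [mulVec_sub, sub_mulVec, one_mulVec]; abel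
  exact hfun ▸ hx.sub (hQw.add_const c)

end Calculus

theorem skew_add (x w : Fin 3 → ℝ) : skew (x + w) = skew x + skew w := by
  ext i j; fin_cases i <;> fin_cases j <;> simp [skew] <;> ring

theorem skew_smul (c : ℝ) (x : Fin 3 → ℝ) : skew (c • x) = c • skew x := by
  ext i j; fin_cases i <;> fin_cases j <;> simp [skew]

theorem skew_neg (x : Fin 3 → ℝ) : skew (-x) = -skew x := by
  simpa using skew_smul (-1) x

theorem skew_transpose (x : Fin 3 → ℝ) : (skew x)ᵀ = -skew x := by
  ext i j; fin_cases i <;> fin_cases j <;> simp [skew]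

theorem skew_mulVec (x w : Fin 3 → ℝ) : skew x *ᵥ w = x ⨯₃ w := by
  ext i; fin_cases i <;> simp [skew, cross_apply, mulVec, dotProduct, Fin.sum_univ_three] <;> ring

theorem transpose_mul_skew_mulVec_mul (A : Matrix (Fin 3) (Fin 3) ℝ) (x : Fin 3 → ℝ) :
    Aᵀ * skew (A *ᵥ x) * A = A.det • skew x := by
  ext i j
  fin_cases i <;> fin_cases j <;>
    simp [skew, det_fin_three, Matrix.mul_apply, mulVec, dotProduct, Fin.sum_univ_three] <;> ring

theorem SO3.mul_skew_mul_transpose {Q : Matrix (Fin 3) (Fin 3) ℝ} (hQ : SO3 Q) (x : Fin 3 → ℝ) :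
    Q * skew x * Qᵀ = skew (Q *ᵥ x) := by
  obtain ⟨-, hQQt, hdet⟩ := hQ
  calc Q * skew x * Qᵀ = Q * (Qᵀ * skew (Q *ᵥ x) * Q) * Qᵀ := by
        rw [transpose_mul_skew_mulVec_mul, hdet, one_smul]
    _ = (Q * Qᵀ) * skew (Q *ᵥ x) * (Q * Qᵀ) := by simp only [Matrix.mul_assoc]
    _ = skew (Q *ᵥ x) := by rw [hQQt, Matrix.one_mul, Matrix.mul_one]

theorem SO3.mul_transpose {A B : Matrix (Fin 3) (Fin 3) ℝ} (hA : SO3 A) (hB : SO3 B) :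
    SO3 (A * Bᵀ) := by
  obtain ⟨hAtA, hAAt, hAdet⟩ := hA
  obtain ⟨hBtB, hBBt, hBdet⟩ := hB
  refine ⟨?_, ?_, by rw [det_mul, det_transpose, hAdet, hBdet, one_mul]⟩
  · rw [transpose_mul, transpose_transpose, Matrix.mul_assoc, ← Matrix.mul_assoc Aᵀ, hAtA,
      Matrix.one_mul, hBBt]
  · rw [transpose_mul, transpose_transpose, Matrix.mul_assoc, ← Matrix.mul_assoc Bᵀ, hBtB,
      Matrix.one_mul, hAAt]

theorem psi_add (A B : Matrix (Fin 3) (Fin 3) ℝ) : psi (A + B) = psi A + psi B := by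
  ext i; fin_cases i <;> simp [psi] <;> ring

theorem psi_smul (c : ℝ) (A : Matrix (Fin 3) (Fin 3) ℝ) : psi (c • A) = c • psi A := by
  ext i; fin_cases i <;> simp [psi] <;> ring

theorem psi_sum {ι : Type*} (s : Finset ι) (A : ι → Matrix (Fin 3) (Fin 3) ℝ) :
    psi (∑ i ∈ s, A i) = ∑ i ∈ s, psi (A i) :=
  map_sum (IsLinearMap.mk' psi ⟨psi_add, psi_smul⟩) A s

theorem psi_vecMulVec_mul (q : Fin 3 → ℝ) (Q : Matrix (Fin 3) (Fin 3) ℝ) :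
    psi (vecMulVec q q * Q) = (2 : ℝ)⁻¹ • (Qᵀ *ᵥ q) ⨯₃ q := by
  ext i
  fin_cases i <;>
    simp [psi, cross_apply, vecMulVec, Matrix.mul_apply, mulVec, dotProduct,
      Fin.sum_univ_three] <;> ring

theorem sum_smul_sub_eq_zero {ι R E : Type*} [Fintype ι] [Ring R] [AddCommGroup E] [Module R E]
    {k : ι → R} {x : ι → E} {c : E} (hk : ∑ i, k i = 1) (hc : c = ∑ i, k i • x i) :
    ∑ i, k i • (x i - c) = 0 := by
  simp [smul_sub, Finset.sum_sub_distrib, ← Finset.sum_smul, hk, hc]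

theorem landmark_error_eq {Q : Matrix (Fin 3) (Fin 3) ℝ} (hQ : Qᵀ * Q = 1) (x p ph c : Fin 3 → ℝ) :
    x - ph - Qᵀ *ᵥ (x - p) = (1 - Qᵀ) *ᵥ (x - c) + Qᵀ *ᵥ (p - Q *ᵥ ph - (1 - Q) *ᵥ c) := by
  simp only [mulVec_sub, sub_mulVec, one_mulVec, mulVec_mulVec, hQ]
  abel

section Innovation

variable {ι : Type*} [Fintype ι] {k : ι → ℝ} {q : ι → Fin 3 → ℝ}

theorem sum_smul_mulVec_add (hk : ∑ i, k i = 1) (hq : ∑ i, k i • q i = 0)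
    (A : Matrix (Fin 3) (Fin 3) ℝ) (w : Fin 3 → ℝ) :
    ∑ i, k i • (A *ᵥ q i + w) = w := by
  simp only [smul_add, Finset.sum_add_distrib, ← Finset.sum_smul, hk, one_smul, ← mulVec_smul,
    ← mulVec_sum, hq, mulVec_zero, zero_add]

theorem half_sum_smul_skew_mulVec (hq : ∑ i, k i • q i = 0)
    (Q : Matrix (Fin 3) (Fin 3) ℝ) (w : Fin 3 → ℝ) :
    (2 : ℝ)⁻¹ • ∑ i, k i • skew (q i) *ᵥ ((1 - Qᵀ) *ᵥ q i + w)
      = psi ((∑ i, k i • vecMulVec (q i) (q i)) * Q) := by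
  have hterm : ∀ i, skew (q i) *ᵥ ((1 - Qᵀ) *ᵥ q i + w) = (Qᵀ *ᵥ q i) ⨯₃ q i + q i ⨯₃ w := by
    intro i
    rw [skew_mulVec, sub_mulVec, one_mulVec, map_add, map_sub, cross_self, zero_sub,
      cross_anticomm]
  have hcentred : ∑ i, k i • q i ⨯₃ w = 0 := by
    simpa [LinearMap.map_sum₂, LinearMap.map_smul₂] using congrArg (· ⨯₃ w) hq
  simp only [hterm, smul_add, Finset.sum_add_distrib, hcentred, add_zero,
    Finset.sum_mul, smul_mul_assoc, psi_sum, psi_smul, psi_vecMulVec_mul, Finset.smul_sum,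
    smul_comm (k _) (2 : ℝ)⁻¹]

end Innovation

theorem hasDerivAt_mul_transpose_of_skew {R Rh : ℝ → Matrix (Fin 3) (Fin 3) ℝ}
    {ω u : Fin 3 → ℝ} {t : ℝ} (hR : HasDerivAt R (R t * skew ω) t)
    (hRh : HasDerivAt Rh (Rh t * skew (ω + u)) t) (hRhSO3 : SO3 (Rh t)) :
    HasDerivAt (fun s => R s * (Rh s)ᵀ) (-(R t * (Rh t)ᵀ * skew (Rh t *ᵥ u))) t :=
  (hR.matrix_mul hRh.matrix_transpose).congr_deriv <| by
    rw [← hRhSO3.mul_skew_mul_transpose, transpose_mul, skew_transpose, skew_add]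
    calc R t * skew ω * (Rh t)ᵀ + R t * (-(skew ω + skew u) * (Rh t)ᵀ)
        = -(R t * ((Rh t)ᵀ * Rh t) * skew u * (Rh t)ᵀ) := by
          rw [hRhSO3.1, Matrix.mul_one]; noncomm_ring
      _ = _ := by simp only [Matrix.mul_assoc]

theorem closed_loop_error_dynamics_general
    (N : ℕ) (pl : Fin N → Fin 3 → ℝ) (k : Fin N → ℝ)
    (hsum : ∑ i, k i = 1)
    (pc : Fin 3 → ℝ) (hpc : pc = ∑ i, k i • pl i)
    (M : Matrix (Fin 3) (Fin 3) ℝ)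
    (hM : M = ∑ i, k i • vecMulVec (pl i - pc) (pl i - pc))
    (kR : ℝ) (Kp Kv : Matrix (Fin 3) (Fin 3) ℝ) (g : Fin 3 → ℝ)
    -- true state and inputs
    (R : ℝ → Matrix (Fin 3) (Fin 3) ℝ) (p v : ℝ → Fin 3 → ℝ)
    (ω a : ℝ → Fin 3 → ℝ)
    (hRSO3 : ∀ t, SO3 (R t))
    (hRdot : ∀ t, HasDerivAt R (R t * skew (ω t)) t)
    (hpdot : ∀ t, HasDerivAt p (v t) t)
    (hvdot : ∀ t, HasDerivAt v (g + (R t).mulVec (a t)) t)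
    -- measurements
    (y : ℝ → Fin N → Fin 3 → ℝ) (hy : ∀ t i, y t i = (R t)ᵀ.mulVec (pl i - p t))
    -- observer state
    (Rh : ℝ → Matrix (Fin 3) (Fin 3) ℝ) (ph vh : ℝ → Fin 3 → ℝ)
    (hRhSO3 : ∀ t, SO3 (Rh t))
    -- innovation terms
    (σR yb : ℝ → Fin 3 → ℝ)
    (hσR : ∀ t, σR t = (2 : ℝ)⁻¹ •
      ∑ i, k i • (skew (pl i - pc)).mulVec (pl i - ph t - (Rh t).mulVec (y t i)))
    (hyb : ∀ t, yb t = ∑ i, k i • (pl i - ph t - (Rh t).mulVec (y t i)))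
    -- observer dynamics
    (hRhdot : ∀ t, HasDerivAt Rh (Rh t * skew (ω t + kR • (Rh t)ᵀ.mulVec (σR t))) t)
    (hphdot : ∀ t, HasDerivAt ph
      (vh t + kR • (skew (σR t)).mulVec (ph t - pc) + Kp.mulVec (yb t)) t)
    (hvhdot : ∀ t, HasDerivAt vh
      (g + (Rh t).mulVec (a t) + kR • (skew (σR t)).mulVec (vh t)
        + Kv.mulVec (yb t)) t)
    -- error variables
    (Rt : ℝ → Matrix (Fin 3) (Fin 3) ℝ) (hRt : ∀ t, Rt t = R t * (Rh t)ᵀ)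
    (vt : ℝ → Fin 3 → ℝ) (hvt : ∀ t, vt t = v t - (Rt t).mulVec (vh t))
    (pt : ℝ → Fin 3 → ℝ)
    (hpt : ∀ t, pt t = p t - (Rt t).mulVec (ph t) - (1 - Rt t).mulVec pc) :
    (∀ t, HasDerivAt Rt (Rt t * skew (-(kR • psi (M * Rt t)))) t) ∧
    (∀ t, HasDerivAt pt
      (vt t - (Rt t * Kp * (Rt t)ᵀ).mulVec (pt t)) t) ∧
    (∀ t, HasDerivAt vt
      ((1 - Rt t).mulVec g - (Rt t * Kv * (Rt t)ᵀ).mulVec (pt t)) t) := by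
  have hRtSO3 : ∀ t, SO3 (Rt t) := fun t => hRt t ▸ (hRSO3 t).mul_transpose (hRhSO3 t)
  have herr : ∀ t i, pl i - ph t - Rh t *ᵥ y t i
      = (1 - (Rt t)ᵀ) *ᵥ (pl i - pc) + (Rt t)ᵀ *ᵥ pt t := fun t i => by
    rw [hy, mulVec_mulVec, ← transpose_transpose (Rh t), ← transpose_mul, ← hRt, hpt]
    exact landmark_error_eq (hRtSO3 t).1 _ _ _ _
  have hcentred := sum_smul_sub_eq_zero hsum hpc
  have hyb' : ∀ t, yb t = (Rt t)ᵀ *ᵥ pt t := fun t => by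
    simp only [hyb, herr]; exact sum_smul_mulVec_add hsum hcentred _ _
  have hσR' : ∀ t, σR t = psi (M * Rt t) := fun t => by
    simp only [hσR, herr, hM]; exact half_sum_smul_skew_mulVec hcentred _ _
  have hRt' : ∀ t, HasDerivAt Rt (-(Rt t * skew (kR • σR t))) t := fun t => by
    have h := hasDerivAt_mul_transpose_of_skew (hRdot t) (hRhdot t) (hRhSO3 t)
    rwa [mulVec_smul, mulVec_mulVec, (hRhSO3 t).2.1, one_mulVec, ← hRt, ← funext hRt] at h
  refine ⟨fun t => ?_, fun t => ?_, fun t => ?_⟩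
  · rw [← hσR', skew_neg, Matrix.mul_neg]; exact hRt' t
  · have hph : HasDerivAt ph (vh t + Kp *ᵥ yb t + skew (kR • σR t) *ᵥ (ph t - pc)) t :=
      (hphdot t).congr_deriv (by rw [skew_smul, smul_mulVec]; abel)
    have h := (hpdot t).sub_mulVec_sub_of_frame (hRt' t) hph
    rw [← funext hpt] at h
    refine h.congr_deriv ?_
    rw [hvt, hyb', mulVec_add, ← mulVec_mulVec, ← mulVec_mulVec, sub_add_eq_sub_sub]
  · have hvh : HasDerivAt vh (g + Rh t *ᵥ a t + Kv *ᵥ yb t + skew (kR • σR t) *ᵥ vh t) t :=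
      (hvhdot t).congr_deriv (by rw [skew_smul, smul_mulVec]; abel)
    have h := (hvdot t).fun_sub ((hRt' t).matrix_mulVec_of_frame hvh)
    rw [← funext hvt] at h
    refine h.congr_deriv ?_
    have hRtRh : Rt t * Rh t = R t := by rw [hRt, Matrix.mul_assoc, (hRhSO3 t).1, Matrix.mul_one]
    rw [hyb', mulVec_add, mulVec_add, mulVec_mulVec, hRtRh, sub_mulVec, one_mulVec,
      ← mulVec_mulVec, ← mulVec_mulVec]
    abel

/-- Closed-loop error dynamics of the continuous navigation observer:
`R̃' = R̃(-k_R ψ(MR̃))^×`, `p̃' = ṽ - R̃K_pR̃ᵀp̃`, `ṽ' = (I - R̃)g - R̃K_vR̃ᵀp̃`;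
in particular the attitude error dynamics are decoupled from `(p̃, ṽ)`. -/
theorem closed_loop_error_dynamics
    (N : ℕ) (pl : Fin N → Fin 3 → ℝ) (k : Fin N → ℝ)
    (hk : ∀ i, 0 < k i) (hsum : ∑ i, k i = 1)
    (pc : Fin 3 → ℝ) (hpc : pc = ∑ i, k i • pl i)
    (M : Matrix (Fin 3) (Fin 3) ℝ)
    (hM : M = ∑ i, k i • vecMulVec (pl i - pc) (pl i - pc))
    (kR : ℝ) (Kp Kv : Matrix (Fin 3) (Fin 3) ℝ) (g : Fin 3 → ℝ)
    -- true state and inputs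
    (R : ℝ → Matrix (Fin 3) (Fin 3) ℝ) (p v : ℝ → Fin 3 → ℝ)
    (ω a : ℝ → Fin 3 → ℝ)
    (hRSO3 : ∀ t, SO3 (R t))
    (hRdot : ∀ t, HasDerivAt R (R t * skew (ω t)) t)
    (hpdot : ∀ t, HasDerivAt p (v t) t)
    (hvdot : ∀ t, HasDerivAt v (g + (R t).mulVec (a t)) t)
    -- measurements
    (y : ℝ → Fin N → Fin 3 → ℝ) (hy : ∀ t i, y t i = (R t)ᵀ.mulVec (pl i - p t))
    -- observer state
    (Rh : ℝ → Matrix (Fin 3) (Fin 3) ℝ) (ph vh : ℝ → Fin 3 → ℝ)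
    (hRhSO3 : ∀ t, SO3 (Rh t))
    -- innovation terms
    (σR yb : ℝ → Fin 3 → ℝ)
    (hσR : ∀ t, σR t = (2 : ℝ)⁻¹ •
      ∑ i, k i • (skew (pl i - pc)).mulVec (pl i - ph t - (Rh t).mulVec (y t i)))
    (hyb : ∀ t, yb t = ∑ i, k i • (pl i - ph t - (Rh t).mulVec (y t i)))
    -- observer dynamics
    (hRhdot : ∀ t, HasDerivAt Rh (Rh t * skew (ω t + kR • (Rh t)ᵀ.mulVec (σR t))) t)
    (hphdot : ∀ t, HasDerivAt ph
      (vh t + kR • (skew (σR t)).mulVec (ph t - pc) + Kp.mulVec (yb t)) t)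
    (hvhdot : ∀ t, HasDerivAt vh
      (g + (Rh t).mulVec (a t) + kR • (skew (σR t)).mulVec (vh t)
        + Kv.mulVec (yb t)) t)
    -- error variables
    (Rt : ℝ → Matrix (Fin 3) (Fin 3) ℝ) (hRt : ∀ t, Rt t = R t * (Rh t)ᵀ)
    (vt : ℝ → Fin 3 → ℝ) (hvt : ∀ t, vt t = v t - (Rt t).mulVec (vh t))
    (pt : ℝ → Fin 3 → ℝ)
    (hpt : ∀ t, pt t = p t - (Rt t).mulVec (ph t) - (1 - Rt t).mulVec pc) :
    (∀ t, HasDerivAt Rt (Rt t * skew (-(kR • psi (M * Rt t)))) t) ∧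
    (∀ t, HasDerivAt pt
      (vt t - (Rt t * Kp * (Rt t)ᵀ).mulVec (pt t)) t) ∧
    (∀ t, HasDerivAt vt
      ((1 - Rt t).mulVec g - (Rt t * Kv * (Rt t)ᵀ).mulVec (pt t)) t) :=
  closed_loop_error_dynamics_general N pl k hsum pc hpc M hM kR Kp Kv g R p v ω a hRSO3 hRdot hpdot
    hvdot y hy Rh ph vh hRhSO3 σR yb hσR hyb hRhdot hphdot hvhdot Rt hRt vt hvt pt hpt
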